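/- Suppose α < 0, bc < 0, α² > a², and d = √(-bc). If ω₂ = -d + √(α² - a²), d ≠ √(α² - a²), and τ = (1/ω₂)(-2nπ - arccos(-a/α)) for a nonnegative integer n, then λ = iω₂ satisfies λ + α e^{-λτ} + a + i d = 0. -/

import Mathlib

/-! Since `ω₂ τ ≡ -arccos E (mod 2π)`, `α e^{-iω₂τ} = α (E + i sin (arccos E)) = -a - i √D`
because `α < 0`; this cancels `a` and the `√D` part of `i ω₂`, leaving `-i d + i d = 0`. -/

open Complex

theorem mul_exp_arccos_neg_div_mul_I {a α : ℝ} (hα : α < 0) (h : a ^ 2 ≤ α ^ 2) :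
    (α : ℂ) * exp (Real.arccos (-(a / α)) * I) = -a - Real.sqrt (α ^ 2 - a ^ 2) * I := by
  have hα0 : α ≠ 0 := hα.ne
  have hsq : (a / α) ^ 2 ≤ 1 := by
    rw [div_pow, div_le_one (by positivity)]; exact h
  have hbound : |-(a / α)| ≤ 1 := by
    rw [abs_neg]; exact abs_le_one_iff_mul_self_le_one.2 (by nlinarith)
  have hcos : α * Real.cos (Real.arccos (-(a / α))) = -a := by
    rw [Real.cos_arccos (abs_le.1 hbound).1 (abs_le.1 hbound).2]; field_simp
  have hsin : α * Real.sin (Real.arccos (-(a / α))) = -Real.sqrt (α ^ 2 - a ^ 2) := by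
    rw [Real.sin_arccos, neg_sq, show α ^ 2 - a ^ 2 = α ^ 2 * (1 - (a / α) ^ 2) by field_simp,
      Real.sqrt_mul (sq_nonneg α), Real.sqrt_sq_eq_abs, abs_of_neg hα]
    ring
  rw [exp_mul_I, ← ofReal_cos, ← ofReal_sin, mul_add, ← mul_assoc, ← ofReal_mul, ← ofReal_mul,
    hcos, hsin]
  push_cast
  ring

theorem exp_neg_I_mul_eq_exp_mul_I {ω τ θ : ℝ} (n : ℤ) (h : ω * τ = -(2 * n * Real.pi) - θ) :
    exp (-(I * ω) * τ) = exp (θ * I) := by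
  have harg : -(I * ω) * τ = θ * I + n * (2 * Real.pi * I) := by
    have h' := congrArg ofReal h
    push_cast at h'
    linear_combination (-I) * h'
  rw [harg, exp_add, exp_int_mul_two_pi_mul_I, mul_one]

theorem stmt_6_general (a α : ℝ) (hα : α < 0) (hD : α ^ 2 > a ^ 2)
    (d D E ω₂ : ℝ) (hDdef : D = α ^ 2 - a ^ 2)
    (hE : E = -(a / α)) (hω₂ : ω₂ = -d + Real.sqrt D) (hne : d ≠ Real.sqrt D)
    (n : ℕ) (τ : ℝ)
    (hτ : τ = (1 / ω₂) * (-(2 * n * Real.pi) - Real.arccos E)) :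
    Complex.I * ω₂ + α * Complex.exp (-(Complex.I * ω₂) * τ) + a + Complex.I * d = 0 := by
  have hω₂0 : ω₂ ≠ 0 := fun h ↦ hne (by linarith)
  have hωτ : ω₂ * τ = -(2 * (n : ℤ) * Real.pi) - Real.arccos E := by
    rw [hτ]; push_cast; field_simp
  rw [exp_neg_I_mul_eq_exp_mul_I n hωτ, hE, mul_exp_arccos_neg_div_mul_I hα hD.le, ← hDdef, hω₂]
  push_cast
  ring

theorem stmt_6 (a α b c : ℝ) (hα : α < 0) (hbc : b * c < 0) (hD : α ^ 2 > a ^ 2)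
    (d D E ω₂ : ℝ) (hd : d = Real.sqrt (-(b * c))) (hDdef : D = α ^ 2 - a ^ 2)
    (hE : E = -(a / α)) (hω₂ : ω₂ = -d + Real.sqrt D) (hne : d ≠ Real.sqrt D)
    (n : ℕ) (τ : ℝ)
    (hτ : τ = (1 / ω₂) * (-(2 * n * Real.pi) - Real.arccos E)) :
    Complex.I * ω₂ + α * Complex.exp (-(Complex.I * ω₂) * τ) + a + Complex.I * d = 0 :=
  stmt_6_general a α hα hD d D E ω₂ hDdef hE hω₂ hne n τ hτ
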